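/- arXiv:2308.01413 — 7 statements merged into one kernel-verified Lean document; each statement's English description precedes it below -/
import Mathlib

section
/- Let p be a pmf on S × T with first marginal pX, second marginal pY, and conditional entropy H(Y|X). Then H(Y|X) ≤ H(Y), where H(Y) is the entropy of the marginal pY; that is, conditioning does not increase entropy. -/
/-- Entropy of the joint distribution `p` on `S × T` (natural log). -/
noncomputable def pairEntropy {S T : Type*} [Fintype S] [Fintype T]
    (p : S × T → ℝ) : ℝ :=
  ∑ z : S × T, Real.negMulLog (p z)

/-- First marginal `pX x = ∑ y, p (x, y)`. -/
noncomputable def fstMarginal {S T : Type*} [Fintype T] (p : S × T → ℝ) (x : S) : ℝ :=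
  ∑ y, p (x, y)

/-- Second marginal `pY y = ∑ x, p (x, y)`. -/
noncomputable def sndMarginal {S T : Type*} [Fintype S] (p : S × T → ℝ) (y : T) : ℝ :=
  ∑ x, p (x, y)

/-- Entropy `H(X)` of the first marginal. -/
noncomputable def fstEntropy {S T : Type*} [Fintype S] [Fintype T] (p : S × T → ℝ) : ℝ :=
  ∑ x, Real.negMulLog (fstMarginal p x)

/-- Entropy `H(Y)` of the second marginal. -/
noncomputable def sndEntropy {S T : Type*} [Fintype S] [Fintype T] (p : S × T → ℝ) : ℝ :=
  ∑ y, Real.negMulLog (sndMarginal p y)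

/-- Conditional entropy `H(Y | X) = ∑_{x : pX x ≠ 0} pX x * H(y ↦ p (x,y) / pX x)`. -/
noncomputable def condEntropySndGivenFst {S T : Type*} [Fintype S] [Fintype T]
    (p : S × T → ℝ) : ℝ :=
  ∑ x, if fstMarginal p x = 0 then 0
    else fstMarginal p x * ∑ y, Real.negMulLog (p (x, y) / fstMarginal p x)

/-- Conditioning does not increase entropy: `H(Y|X) ≤ H(Y)`. -/
theorem condEntropy_le_sndEntropy
    {S T : Type*} [Fintype S] [Fintype T] [Nonempty S] [Nonempty T]
    (p : S × T → ℝ) (hp0 : ∀ z, 0 ≤ p z) (hp1 : ∑ z, p z = 1) :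
    condEntropySndGivenFst p ≤ sndEntropy p := by
  classical
  set pX := fstMarginal p with hpX
  have hpX0 : ∀ x, 0 ≤ pX x := fun x => Finset.sum_nonneg fun y _ => hp0 _
  have hpXz : ∀ x y, pX x = 0 → p (x, y) = 0 := by
    intro x y h
    have := (Finset.sum_eq_zero_iff_of_nonneg (fun y _ => hp0 (x, y))).mp h
    exact this y (Finset.mem_univ _)
  have hpXsum : ∑ x, pX x = 1 := by
    rw [← hp1, Fintype.sum_prod_type]; rfl
  set f : S → T → ℝ := fun x y => if pX x = 0 then 0 else p (x, y) / pX x with hf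
  have key : condEntropySndGivenFst p = ∑ y, ∑ x, pX x • Real.negMulLog (f x y) := by
    rw [Finset.sum_comm]
    unfold condEntropySndGivenFst
    refine Finset.sum_congr rfl fun x _ => ?_
    by_cases h : pX x = 0
    · simp only [hf]
      rw [← hpX, if_pos h]
      simp [h]
    · rw [if_neg h, Finset.mul_sum]
      refine Finset.sum_congr rfl fun y _ => ?_
      simp [hf, h, smul_eq_mul]
      rfl
  rw [key]
  unfold sndEntropy
  refine Finset.sum_le_sum fun y _ => ?_
  have hmarg : ∑ x, pX x • f x y = sndMarginal p y := by
    unfold sndMarginal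
    refine Finset.sum_congr rfl fun x _ => ?_
    by_cases h : pX x = 0
    · simp [hf, h, hpXz x y h]
    · simp only [hf, if_neg h, smul_eq_mul]
      field_simp
  calc ∑ x, pX x • Real.negMulLog (f x y)
      ≤ Real.negMulLog (∑ x, pX x • f x y) := by
        refine Real.concaveOn_negMulLog.le_map_sum (fun x _ => hpX0 x) hpXsum fun x _ => ?_
        by_cases h : pX x = 0
        · simp [hf, h]
        · simp only [hf, if_neg h, Set.mem_Ici]
          exact div_nonneg (hp0 _) (hpX0 x)
    _ = Real.negMulLog (sndMarginal p y) := by rw [hmarg]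
end

section
/- Let p be a pmf on S × T with first marginal pX, second marginal pY, and joint entropy H(X,Y). Then H(X,Y) ≤ H(X) + H(Y), where H(X) and H(Y) are the entropies of the marginals pX and pY. -/
/-!
Gibbs' inequality `-∑ p log p ≤ -∑ p log q`, applied with `q` the product `pX ⊗ pY` of the
marginals (again a pmf, positive wherever `p` is), gives `H(X,Y) ≤ -∑ p log pX - ∑ p log pY`,
and the two sums on the right are `H(X)` and `H(Y)`.
-/

open Real Finset

theorem negMulLog_add_mul_log_le {p q : ℝ} (hp : 0 ≤ p) (hq : 0 ≤ q) (hpq : q = 0 → p = 0) :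
    negMulLog p + p * log q ≤ q - p := by
  rcases hq.eq_or_lt with rfl | hq
  · simp [hpq rfl]
  rcases hp.eq_or_lt with rfl | hp
  · simpa using hq.le
  -- `q * negMulLog (p / q) = negMulLog p + p * log q`, and `negMulLog t ≤ 1 - t`.
  have h := mul_le_mul_of_nonneg_left (negMulLog_le_one_sub_self (div_nonneg hp.le hq.le)) hq.le
  rw [negMulLog, log_div hp.ne' hq.ne'] at h
  field_simp at h
  rw [negMulLog]
  linarith

theorem sum_negMulLog_le_neg_sum_mul_log {ι : Type*} (s : Finset ι) {p q : ι → ℝ}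
    (hp : ∀ i ∈ s, 0 ≤ p i) (hq : ∀ i ∈ s, 0 ≤ q i) (hpq : ∀ i ∈ s, q i = 0 → p i = 0)
    (hsum : ∑ i ∈ s, q i ≤ ∑ i ∈ s, p i) :
    ∑ i ∈ s, negMulLog (p i) ≤ -∑ i ∈ s, p i * log (q i) := by
  have h := sum_le_sum fun i hi => negMulLog_add_mul_log_le (hp i hi) (hq i hi) (hpq i hi)
  rw [sum_add_distrib, sum_sub_distrib] at h
  linarith

section Marginals

variable {S T : Type*} {p : S × T → ℝ}

theorem fstMarginal_nonneg [Fintype T] (hp : ∀ z, 0 ≤ p z) (x : S) : 0 ≤ fstMarginal p x :=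
  sum_nonneg fun y _ => hp (x, y)

theorem sndMarginal_nonneg [Fintype S] (hp : ∀ z, 0 ≤ p z) (y : T) : 0 ≤ sndMarginal p y :=
  sum_nonneg fun x _ => hp (x, y)

theorem le_fstMarginal [Fintype T] (hp : ∀ z, 0 ≤ p z) (z : S × T) : p z ≤ fstMarginal p z.1 :=
  single_le_sum (f := fun y => p (z.1, y)) (fun _ _ => hp _) (mem_univ z.2)

theorem le_sndMarginal [Fintype S] (hp : ∀ z, 0 ≤ p z) (z : S × T) : p z ≤ sndMarginal p z.2 :=
  single_le_sum (f := fun x => p (x, z.2)) (fun _ _ => hp _) (mem_univ z.1)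

theorem sum_fstMarginal [Fintype S] [Fintype T] (p : S × T → ℝ) :
    ∑ x, fstMarginal p x = ∑ z, p z :=
  (Fintype.sum_prod_type p).symm

theorem sum_sndMarginal [Fintype S] [Fintype T] (p : S × T → ℝ) :
    ∑ y, sndMarginal p y = ∑ z, p z :=
  (Fintype.sum_prod_type_right p).symm

theorem fstEntropy_eq_neg_sum_mul_log [Fintype S] [Fintype T] (p : S × T → ℝ) :
    fstEntropy p = -∑ z, p z * log (fstMarginal p z.1) := by
  simp only [fstEntropy, Fintype.sum_prod_type, negMulLog, fstMarginal, ← sum_neg_distrib,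
    sum_mul, neg_mul]

theorem sndEntropy_eq_neg_sum_mul_log [Fintype S] [Fintype T] (p : S × T → ℝ) :
    sndEntropy p = -∑ z, p z * log (sndMarginal p z.2) := by
  simp only [sndEntropy, Fintype.sum_prod_type_right, negMulLog, sndMarginal, ← sum_neg_distrib,
    sum_mul, neg_mul]

end Marginals

theorem pairEntropy_le_add_marginal_entropies_general
    {S T : Type*} [Fintype S] [Fintype T]
    (p : S × T → ℝ) (hp0 : ∀ z, 0 ≤ p z) (hp1 : ∑ z, p z = 1) :
    pairEntropy p ≤ fstEntropy p + sndEntropy p := by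
  set q : S × T → ℝ := fun z => fstMarginal p z.1 * sndMarginal p z.2
  have hq0 z : 0 ≤ q z := mul_nonneg (fstMarginal_nonneg hp0 _) (sndMarginal_nonneg hp0 _)
  have hpos z (hz : 0 < p z) : 0 < fstMarginal p z.1 ∧ 0 < sndMarginal p z.2 :=
    ⟨hz.trans_le (le_fstMarginal hp0 z), hz.trans_le (le_sndMarginal hp0 z)⟩
  have hpq z (hz : q z = 0) : p z = 0 := by
    by_contra hne
    obtain ⟨hx, hy⟩ := hpos z ((hp0 z).lt_of_ne' hne)
    exact (mul_pos hx hy).ne' hz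
  have hsum : ∑ z, q z = ∑ z, p z := by
    rw [Fintype.sum_prod_type, ← sum_mul_sum, sum_fstMarginal, sum_sndMarginal, hp1, one_mul]
  have hlog z : p z * log (q z) =
      p z * log (fstMarginal p z.1) + p z * log (sndMarginal p z.2) := by
    rcases (hp0 z).eq_or_lt with h | h
    · simp [← h]
    · obtain ⟨hx, hy⟩ := hpos z h
      rw [log_mul hx.ne' hy.ne', mul_add]
  calc pairEntropy p ≤ -∑ z, p z * log (q z) :=
        sum_negMulLog_le_neg_sum_mul_log univ (fun z _ => hp0 z) (fun z _ => hq0 z)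
          (fun z _ => hpq z) hsum.le
    _ = fstEntropy p + sndEntropy p := by
        rw [fstEntropy_eq_neg_sum_mul_log, sndEntropy_eq_neg_sum_mul_log, ← neg_add,
          ← sum_add_distrib]
        simp only [hlog]

/-- Subadditivity of entropy: `H(X,Y) ≤ H(X) + H(Y)`. -/
theorem pairEntropy_le_add_marginal_entropies
    {S T : Type*} [Fintype S] [Fintype T] [Nonempty S] [Nonempty T]
    (p : S × T → ℝ) (hp0 : ∀ z, 0 ≤ p z) (hp1 : ∑ z, p z = 1) :
    pairEntropy p ≤ fstEntropy p + sndEntropy p :=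
  pairEntropy_le_add_marginal_entropies_general p hp0 hp1
end

section
/- Let m ≥ 1, let A be an invertible real m×m matrix, and let Z : ℕ → Matrix (Fin m) (Fin m) ℝ satisfy Z (j+1) = Φ(A, Z j) for all j, where Φ(A, Z) = (1/4 : ℝ) • (Z * (13 • I - A * Z * (15 • I - A * Z * (7 • I - A * Z)))). If ‖I - A * Z 0‖ < 1, then the sequence Z j converges to A⁻¹. -/
open scoped Matrix.Norms.L2Operator

/-- One step `Φ(A, Z) = ¼ • (Z * (13•I - A*Z * (15•I - A*Z * (7•I - A*Z))))` of the
hyperpower iteration of the paper's Lemma 1. -/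
noncomputable def hyperpowerStep {m : ℕ} (A Z : Matrix (Fin m) (Fin m) ℝ) :
    Matrix (Fin m) (Fin m) ℝ :=
  (1 / 4 : ℝ) • (Z * ((13 : ℝ) • (1 : Matrix (Fin m) (Fin m) ℝ) -
    A * Z * ((15 : ℝ) • (1 : Matrix (Fin m) (Fin m) ℝ) -
      A * Z * ((7 : ℝ) • (1 : Matrix (Fin m) (Fin m) ℝ) - A * Z))))

lemma hyperpower_key {m : ℕ} (A Z : Matrix (Fin m) (Fin m) ℝ) :
    (1 : Matrix (Fin m) (Fin m) ℝ) - A * hyperpowerStep A Z =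
      (1 / 4 : ℝ) • ((1 - A * Z) ^ 3 * ((3 : Matrix (Fin m) (Fin m) ℝ) + (1 - A * Z))) := by
  have hn : ∀ (k : ℕ) [k.AtLeastTwo],
      (OfNat.ofNat k : ℝ) • (1 : Matrix (Fin m) (Fin m) ℝ)
        = (OfNat.ofNat k : Matrix (Fin m) (Fin m) ℝ) := by
    intro k _
    rw [Algebra.smul_def, mul_one]; exact map_ofNat _ _
  rw [hyperpowerStep, hn, hn, hn, mul_smul_comm, ← mul_assoc]
  refine smul_right_injective (Matrix (Fin m) (Fin m) ℝ) (by norm_num : (4:ℝ) ≠ 0) ?_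
  simp only [smul_sub, smul_smul]
  norm_num
  rw [hn]
  noncomm_ring
  rw [show ((4:ℤ) • (1 : Matrix (Fin m) (Fin m) ℝ)) = 4 by simp]
  abel

/-- Paper Lemma 1: if `A` is invertible and `‖I - A * Z 0‖ < 1` in the L2
operator norm, the hyperpower iteration converges to `A⁻¹` (the Moore–Penrose
inverse of an invertible matrix). -/
theorem hyperpower_tendsto_inv {m : ℕ} (hm : 1 ≤ m)
    (A : Matrix (Fin m) (Fin m) ℝ) [Invertible A]
    (Z : ℕ → Matrix (Fin m) (Fin m) ℝ)
    (hZ : ∀ j, Z (j + 1) = hyperpowerStep A (Z j))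
    (h0 : ‖(1 : Matrix (Fin m) (Fin m) ℝ) - A * Z 0‖ < 1) :
    Filter.Tendsto Z Filter.atTop (nhds A⁻¹) := by
  haveI : Nonempty (Fin m) := ⟨⟨0, hm⟩⟩
  set E : ℕ → Matrix (Fin m) (Fin m) ℝ := fun j => 1 - A * Z j with hEdef
  have hrec : ∀ j, E (j+1) = (1/4:ℝ) • (E j ^ 3 * ((3 : Matrix (Fin m) (Fin m) ℝ) + E j)) := by
    intro j
    simp only [hEdef]
    rw [hZ j]
    exact hyperpower_key A (Z j)
  set r := ‖E 0‖ with hr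
  have hr0 : 0 ≤ r := norm_nonneg _
  have hr1 : r < 1 := h0
  have h3 : ‖(3 : Matrix (Fin m) (Fin m) ℝ)‖ = 3 := by
    have : (3 : Matrix (Fin m) (Fin m) ℝ) = (3:ℝ) • 1 := by
      rw [Algebra.smul_def, mul_one]; exact (map_ofNat _ _).symm
    rw [this, norm_smul, norm_one]
    norm_num
  have hbound : ∀ j, ‖E j‖ ≤ r ^ (j+1) := by
    intro j
    induction j with
    | zero => simp [hr]
    | succ n ih =>
      have hEn1 : ‖E n‖ ≤ 1 := ih.trans (pow_le_one₀ hr0 hr1.le)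
      have step : ‖E (n+1)‖ ≤ ‖E n‖ ^ 3 := by
        rw [hrec n, norm_smul]
        have h1 : ‖E n ^ 3 * ((3 : Matrix (Fin m) (Fin m) ℝ) + E n)‖
            ≤ ‖E n‖ ^ 3 * (3 + ‖E n‖) := by
          calc ‖E n ^ 3 * ((3 : Matrix (Fin m) (Fin m) ℝ) + E n)‖
              ≤ ‖E n ^ 3‖ * ‖(3 : Matrix (Fin m) (Fin m) ℝ) + E n‖ := norm_mul_le _ _
            _ ≤ ‖E n‖ ^ 3 * (3 + ‖E n‖) := by
                apply mul_le_mul (norm_pow_le' _ (by norm_num))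
                  ((norm_add_le _ _).trans (by rw [h3]))
                  (norm_nonneg _) (pow_nonneg (norm_nonneg _) _)
        have h2 : 3 + ‖E n‖ ≤ 4 := by linarith
        calc ‖(1/4:ℝ)‖ * ‖E n ^ 3 * ((3 : Matrix (Fin m) (Fin m) ℝ) + E n)‖
            ≤ (1/4) * (‖E n‖ ^ 3 * (3 + ‖E n‖)) := by
              rw [Real.norm_eq_abs]
              apply mul_le_mul (le_of_eq (abs_of_nonneg (by norm_num))) h1 (norm_nonneg _) (by norm_num)
          _ ≤ (1/4) * (‖E n‖ ^ 3 * 4) := by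
              apply mul_le_mul_of_nonneg_left _ (by norm_num)
              exact mul_le_mul_of_nonneg_left h2 (pow_nonneg (norm_nonneg _) _)
          _ = ‖E n‖ ^ 3 := by ring
      calc ‖E (n+1)‖ ≤ ‖E n‖ ^ 3 := step
        _ ≤ (r ^ (n+1)) ^ 3 := pow_le_pow_left₀ (norm_nonneg _) ih 3
        _ = r ^ (3*(n+1)) := by rw [← pow_mul, mul_comm]
        _ ≤ r ^ (n+1+1) := pow_le_pow_of_le_one hr0 hr1.le (by omega)
  have hEtend : Filter.Tendsto E Filter.atTop (nhds 0) := by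
    rw [tendsto_zero_iff_norm_tendsto_zero]
    refine squeeze_zero (fun j => norm_nonneg _) hbound ?_
    have := tendsto_pow_atTop_nhds_zero_of_lt_one hr0 hr1
    exact this.comp (Filter.tendsto_add_atTop_nat 1)
  have hZj : ∀ j, Z j = A⁻¹ * (1 - E j) := by
    intro j
    simp only [hEdef, sub_sub_cancel, ← mul_assoc, Matrix.inv_mul_of_invertible, one_mul]
  have : Filter.Tendsto (fun j => A⁻¹ * (1 - E j)) Filter.atTop (nhds (A⁻¹ * (1 - 0))) :=
    Filter.Tendsto.mul tendsto_const_nhds (Filter.Tendsto.sub tendsto_const_nhds hEtend)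
  simp only [sub_zero, mul_one] at this
  convert this using 1
  funext j
  exact hZj j
end

section
/- Let m ≥ 1 and let A, Z be real m×m matrices. Writing R = I - A * Z, the residual after one step of the hyperpower iteration satisfies the exact identity I - A * Φ(A, Z) = (1/4 : ℝ) • (3 • R^3 + R^4), where Φ(A, Z) = (1/4 : ℝ) • (Z * (13 • I - A * Z * (15 • I - A * Z * (7 • I - A * Z)))). -/
open scoped Matrix.Norms.L2Operator

/-- Exact residual identity for one hyperpower step: with `R = I - A * Z`,
`I - A * Φ(A, Z) = ¼ • (3 • R³ + R⁴)`. -/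
theorem residual_hyperpowerStep {m : ℕ} (hm : 1 ≤ m)
    (A Z : Matrix (Fin m) (Fin m) ℝ) :
    (1 : Matrix (Fin m) (Fin m) ℝ) - A * hyperpowerStep A Z =
      (1 / 4 : ℝ) • ((3 : ℝ) • ((1 : Matrix (Fin m) (Fin m) ℝ) - A * Z) ^ 3 +
        ((1 : Matrix (Fin m) (Fin m) ℝ) - A * Z) ^ 4) := by
  simp only [hyperpowerStep, smul_sub, smul_smul, mul_smul_comm, smul_mul_assoc,
    smul_add, sub_mul, mul_sub, mul_one, one_mul]
  set B := A * Z with hB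
  simp only [← mul_assoc]
  rw [← hB]
  simp only [mul_assoc]
  rw [show ((1:Matrix (Fin m) (Fin m) ℝ) - B)^3 = 1 - 3•B + 3•(B*(B*1)) - B*(B*(B*1)) by
    noncomm_ring,
    show ((1:Matrix (Fin m) (Fin m) ℝ) - B)^4
      = 1 - 4•B + 6•(B*(B*1)) - 4•(B*(B*(B*1))) + B*(B*(B*(B*1))) by noncomm_ring]
  simp only [mul_one]
  module
end

section
/- Let m ≥ 1 and let A, Z be real m×m matrices with ‖I - A * Z‖ ≤ 1 in the L2 operator norm. Then ‖I - A * Φ(A, Z)‖ ≤ ‖I - A * Z‖³, where Φ(A, Z) = (1/4 : ℝ) • (Z * (13 • I - A * Z * (15 • I - A * Z * (7 • I - A * Z)))). -/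
open scoped Matrix.Norms.L2Operator

lemma hyperpower_poly_identity {m : ℕ} (X : Matrix (Fin m) (Fin m) ℝ) :
    (4 : Matrix (Fin m) (Fin m) ℝ) - X * (13 - X * (15 - X * (7 - X)))
      = (1 - X) ^ 3 * (3 + (1 - X)) := by
  noncomm_ring
  simp
  abel

lemma smul_one_cast {m : ℕ} (n : ℕ) [n.AtLeastTwo] :
    ((OfNat.ofNat n : ℝ)) • (1 : Matrix (Fin m) (Fin m) ℝ)
      = (OfNat.ofNat n : Matrix (Fin m) (Fin m) ℝ) := by
  simp [← Algebra.algebraMap_eq_smul_one, map_ofNat]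

/-- One-step cubic contraction of the residual: if `‖I - A * Z‖ ≤ 1` then
`‖I - A * Φ(A, Z)‖ ≤ ‖I - A * Z‖³`. -/
theorem norm_residual_hyperpowerStep_le {m : ℕ} (hm : 1 ≤ m)
    (A Z : Matrix (Fin m) (Fin m) ℝ)
    (h : ‖(1 : Matrix (Fin m) (Fin m) ℝ) - A * Z‖ ≤ 1) :
    ‖(1 : Matrix (Fin m) (Fin m) ℝ) - A * hyperpowerStep A Z‖ ≤
      ‖(1 : Matrix (Fin m) (Fin m) ℝ) - A * Z‖ ^ 3 := by
  haveI : NeZero m := ⟨by omega⟩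
  let M := Matrix (Fin m) (Fin m) ℝ
  set X := A * Z with hX
  have h1 : ‖(1 : M)‖ = 1 := by
    rw [Matrix.cstar_norm_def, map_one]; exact norm_one
  have h4 : (1 : M) = (1 / 4 : ℝ) • (4 : M) := by
    rw [← smul_one_cast 4, smul_smul]; norm_num
  have key : (1 : M) - A * hyperpowerStep A Z
      = (1 / 4 : ℝ) • ((1 - X) ^ 3 * (3 + (1 - X))) := by
    rw [hyperpowerStep, mul_smul_comm, ← mul_assoc, ← hX,
      smul_one_cast 13, smul_one_cast 15, smul_one_cast 7]
    nth_rewrite 1 [h4]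
    rw [← smul_sub, hyperpower_poly_identity]
  rw [key, norm_smul]
  have hE : (0 : ℝ) ≤ ‖(1 : M) - X‖ := norm_nonneg _
  have h3 : ‖(3 : M)‖ = 3 := by
    rw [← smul_one_cast 3, norm_smul, h1]; norm_num
  have b1 : ‖(1 - X : M) ^ 3 * (3 + (1 - X))‖ ≤ ‖(1 - X : M)‖ ^ 3 * (3 + ‖(1 - X : M)‖) := by
    calc ‖(1 - X : M) ^ 3 * (3 + (1 - X))‖
        ≤ ‖(1 - X : M) ^ 3‖ * ‖(3 + (1 - X) : M)‖ := norm_mul_le _ _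
      _ ≤ ‖(1 - X : M)‖ ^ 3 * (3 + ‖(1 - X : M)‖) := by
          apply mul_le_mul (norm_pow_le' _ (by norm_num)) ?_ (norm_nonneg _)
            (by positivity)
          calc ‖(3 + (1 - X) : M)‖ ≤ ‖(3 : M)‖ + ‖(1 - X : M)‖ := norm_add_le _ _
            _ = 3 + ‖(1 - X : M)‖ := by rw [h3]
  have : ‖(1 / 4 : ℝ)‖ = 1 / 4 := by norm_num
  rw [this]
  nlinarith [pow_nonneg hE 3, norm_nonneg ((1 - X : M) ^ 3 * (3 + (1 - X)))]
end

section
/- Let m ≥ 1, let A be a real m×m matrix, and let Z : ℕ → Matrix (Fin m) (Fin m) ℝ satisfy Z (j+1) = Φ(A, Z j) for all j, where Φ(A, Z) = (1/4 : ℝ) • (Z * (13 • I - A * Z * (15 • I - A * Z * (7 • I - A * Z)))). If r = ‖I - A * Z 0‖ < 1 in the L2 operator norm, then for every j, ‖I - A * Z j‖ ≤ r^(3^j). -/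
open scoped Matrix.Norms.L2Operator

lemma hyperpower_residual {m : ℕ} (A Z : Matrix (Fin m) (Fin m) ℝ) :
    (1 : Matrix (Fin m) (Fin m) ℝ) - A * hyperpowerStep A Z =
    (1 / 4 : ℝ) • (((1 : Matrix (Fin m) (Fin m) ℝ) - A * Z) ^ 3 *
      ((3 : ℝ) • (1 : Matrix (Fin m) (Fin m) ℝ) +
        ((1 : Matrix (Fin m) (Fin m) ℝ) - A * Z))) := by
  unfold hyperpowerStep
  rw [mul_smul_comm, ← mul_assoc]
  generalize A * Z = X
  noncomm_ring
  module

/-- Third-order convergence of the hyperpower iteration: if the initial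
residual satisfies `r = ‖I - A * Z 0‖ < 1`, then `‖I - A * Z j‖ ≤ r ^ (3 ^ j)`
for every `j`. -/
theorem norm_residual_hyperpower_le {m : ℕ} (hm : 1 ≤ m)
    (A : Matrix (Fin m) (Fin m) ℝ)
    (Z : ℕ → Matrix (Fin m) (Fin m) ℝ)
    (hZ : ∀ j, Z (j + 1) = hyperpowerStep A (Z j))
    (h0 : ‖(1 : Matrix (Fin m) (Fin m) ℝ) - A * Z 0‖ < 1) :
    ∀ j, ‖(1 : Matrix (Fin m) (Fin m) ℝ) - A * Z j‖ ≤
      ‖(1 : Matrix (Fin m) (Fin m) ℝ) - A * Z 0‖ ^ (3 ^ j) := by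
  haveI : NeZero m := ⟨by omega⟩
  set r := ‖(1 : Matrix (Fin m) (Fin m) ℝ) - A * Z 0‖ with hr
  have hr0 : 0 ≤ r := norm_nonneg _
  intro j
  induction j with
  | zero => simp [hr]
  | succ j ih =>
      set E := (1 : Matrix (Fin m) (Fin m) ℝ) - A * Z j with hE
      have hEle1 : ‖E‖ ≤ 1 := ih.trans (pow_le_one₀ hr0 h0.le)
      have key : (1 : Matrix (Fin m) (Fin m) ℝ) - A * Z (j + 1) =
          (1 / 4 : ℝ) • (E ^ 3 * ((3 : ℝ) • (1 : Matrix (Fin m) (Fin m) ℝ) + E)) := by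
        rw [hZ j, hyperpower_residual]
      have hnorm : ‖(1 : Matrix (Fin m) (Fin m) ℝ) - A * Z (j + 1)‖ ≤ ‖E‖ ^ 3 := by
        rw [key, norm_smul]
        have h1 : ‖E ^ 3 * ((3 : ℝ) • (1 : Matrix (Fin m) (Fin m) ℝ) + E)‖ ≤
            ‖E‖ ^ 3 * (3 + ‖E‖) := by
          calc ‖E ^ 3 * ((3 : ℝ) • (1 : Matrix (Fin m) (Fin m) ℝ) + E)‖
              ≤ ‖E ^ 3‖ * ‖(3 : ℝ) • (1 : Matrix (Fin m) (Fin m) ℝ) + E‖ := norm_mul_le _ _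
            _ ≤ ‖E‖ ^ 3 * (3 + ‖E‖) := by
                apply mul_le_mul (norm_pow_le' E (by norm_num)) ?_ (norm_nonneg _)
                  (by positivity)
                calc ‖(3 : ℝ) • (1 : Matrix (Fin m) (Fin m) ℝ) + E‖
                    ≤ ‖(3 : ℝ) • (1 : Matrix (Fin m) (Fin m) ℝ)‖ + ‖E‖ := norm_add_le _ _
                  _ = 3 + ‖E‖ := by rw [norm_smul, norm_one]; norm_num
        calc ‖(1 / 4 : ℝ)‖ * ‖E ^ 3 * ((3 : ℝ) • (1 : Matrix (Fin m) (Fin m) ℝ) + E)‖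
            ≤ ‖(1 / 4 : ℝ)‖ * (‖E‖ ^ 3 * (3 + ‖E‖)) := by
              apply mul_le_mul_of_nonneg_left h1 (norm_nonneg _)
          _ ≤ ‖E‖ ^ 3 := by
              have h4 : ‖(1 / 4 : ℝ)‖ = 1 / 4 := by norm_num [Real.norm_eq_abs]
              rw [h4]
              nlinarith [hEle1, norm_nonneg E, pow_nonneg (norm_nonneg E) 3]
      calc ‖(1 : Matrix (Fin m) (Fin m) ℝ) - A * Z (j + 1)‖ ≤ ‖E‖ ^ 3 := hnorm
        _ ≤ (r ^ 3 ^ j) ^ 3 := pow_le_pow_left₀ (norm_nonneg _) ih 3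
        _ = r ^ 3 ^ (j + 1) := by rw [← pow_mul, pow_succ]
end

section
/- Let m ≥ 1, let A be an invertible real m×m matrix, and let Z : ℕ → Matrix (Fin m) (Fin m) ℝ satisfy Z (j+1) = Φ(A, Z j) for all j, where Φ(A, Z) = (1/4 : ℝ) • (Z * (13 • I - A * Z * (15 • I - A * Z * (7 • I - A * Z)))). If r = ‖I - A * Z 0‖ < 1 in the L2 operator norm, then for every j, ‖Z j - A⁻¹‖ ≤ ‖A⁻¹‖ * r^(3^j). -/
open scoped Matrix.Norms.L2Operator

/-!
The residual `E = I - A Z` of one hyperpower step is `(3 E³ + E⁴) / 4`, a polynomial identity in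
`A Z`. Hence `‖E‖ ≤ 1` forces `‖I - A Φ(A, Z)‖ ≤ ‖E‖³`, so the residuals satisfy
`‖I - A Z j‖ ≤ r ^ 3 ^ j`, and `Z j - A⁻¹ = -A⁻¹ (I - A Z j)` transfers this to the error.
-/

section NormedRing

variable {R : Type*} [NormedRing R]

theorem norm_sub_invOf_le (a z : R) [Invertible a] : ‖z - ⅟a‖ ≤ ‖⅟a‖ * ‖1 - a * z‖ := by
  have h : z - ⅟a = -(⅟a * (1 - a * z)) := by
    rw [mul_sub, mul_one, ← mul_assoc, invOf_mul_self, one_mul, neg_sub]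
  rw [h, norm_neg]
  exact norm_mul_le _ _

variable [NormedAlgebra ℝ R]

theorem norm_quarter_smul_three_smul_pow_three_add_pow_four_le {E : R} (hE : ‖E‖ ≤ 1) :
    ‖(1 / 4 : ℝ) • ((3 : ℝ) • E ^ 3 + E ^ 4)‖ ≤ ‖E‖ ^ 3 := by
  have h3 : ‖E ^ 3‖ ≤ ‖E‖ ^ 3 := norm_pow_le' E (by norm_num)
  have h4 : ‖E ^ 4‖ ≤ ‖E‖ ^ 4 := norm_pow_le' E (by norm_num)
  have h43 : ‖E‖ ^ 4 ≤ ‖E‖ ^ 3 := pow_le_pow_of_le_one (norm_nonneg E) hE (by norm_num)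
  calc ‖(1 / 4 : ℝ) • ((3 : ℝ) • E ^ 3 + E ^ 4)‖
      ≤ 1 / 4 * (3 * ‖E ^ 3‖ + ‖E ^ 4‖) := by
        rw [norm_smul, Real.norm_of_nonneg (by norm_num)]
        gcongr
        exact (norm_add_le _ _).trans (by rw [norm_smul, Real.norm_ofNat])
    _ ≤ ‖E‖ ^ 3 := by linarith

theorem norm_le_pow_three_pow_of_cubic_step {E : ℕ → R}
    (hE : ∀ j, E (j + 1) = (1 / 4 : ℝ) • ((3 : ℝ) • E j ^ 3 + E j ^ 4)) (h0 : ‖E 0‖ ≤ 1) (j : ℕ) :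
    ‖E j‖ ≤ ‖E 0‖ ^ 3 ^ j := by
  induction j with
  | zero => simp
  | succ j ih =>
    have hle : ‖E j‖ ≤ 1 := ih.trans (pow_le_one₀ (norm_nonneg _) h0)
    calc ‖E (j + 1)‖ ≤ ‖E j‖ ^ 3 := hE j ▸ norm_quarter_smul_three_smul_pow_three_add_pow_four_le hle
      _ ≤ (‖E 0‖ ^ 3 ^ j) ^ 3 := by gcongr
      _ = ‖E 0‖ ^ 3 ^ (j + 1) := by rw [← pow_mul, pow_succ]

end NormedRing

theorem one_sub_mul_hyperpowerStep {m : ℕ} (A Z : Matrix (Fin m) (Fin m) ℝ) :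
    1 - A * hyperpowerStep A Z = (1 / 4 : ℝ) • ((3 : ℝ) • (1 - A * Z) ^ 3 + (1 - A * Z) ^ 4) := by
  rw [hyperpowerStep, mul_smul_comm, ← mul_assoc]
  generalize A * Z = X
  simp only [pow_succ, pow_zero, one_mul, mul_one, mul_sub, sub_mul, mul_smul_comm, smul_sub,
    smul_add, smul_smul, mul_assoc]
  module

theorem norm_hyperpower_sub_inv_le_general {m : ℕ}
    (A : Matrix (Fin m) (Fin m) ℝ) [Invertible A]
    (Z : ℕ → Matrix (Fin m) (Fin m) ℝ)
    (hZ : ∀ j, Z (j + 1) = hyperpowerStep A (Z j))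
    (h0 : ‖(1 : Matrix (Fin m) (Fin m) ℝ) - A * Z 0‖ < 1) :
    ∀ j, ‖Z j - A⁻¹‖ ≤ ‖A⁻¹‖ * ‖(1 : Matrix (Fin m) (Fin m) ℝ) - A * Z 0‖ ^ (3 ^ j) := by
  intro j
  have hres : ‖1 - A * Z j‖ ≤ ‖1 - A * Z 0‖ ^ 3 ^ j :=
    norm_le_pow_three_pow_of_cubic_step (E := fun j => 1 - A * Z j)
      (fun j => by rw [hZ, one_sub_mul_hyperpowerStep]) h0.le j
  rw [← Matrix.invOf_eq_nonsing_inv]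
  exact (norm_sub_invOf_le A (Z j)).trans (by gcongr)

/-- Explicit error bound for the hyperpower approximation of `A⁻¹`: if `A` is
invertible and `r = ‖I - A * Z 0‖ < 1`, then `‖Z j - A⁻¹‖ ≤ ‖A⁻¹‖ * r ^ (3 ^ j)`
for every `j`. -/
theorem norm_hyperpower_sub_inv_le {m : ℕ} (hm : 1 ≤ m)
    (A : Matrix (Fin m) (Fin m) ℝ) [Invertible A]
    (Z : ℕ → Matrix (Fin m) (Fin m) ℝ)
    (hZ : ∀ j, Z (j + 1) = hyperpowerStep A (Z j))
    (h0 : ‖(1 : Matrix (Fin m) (Fin m) ℝ) - A * Z 0‖ < 1) :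
    ∀ j, ‖Z j - A⁻¹‖ ≤ ‖A⁻¹‖ * ‖(1 : Matrix (Fin m) (Fin m) ℝ) - A * Z 0‖ ^ (3 ^ j) :=
  norm_hyperpower_sub_inv_le_general A Z hZ h0
end
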